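/- Let p and Q be nonzero complex numbers. Then the set of (complex) eigenvalues of the quantum R matrix Ř³ is exactly {1, −p²Q^{−2}, p⁴, pQ^{−1}, −pQ^{−1}, p³Q^{−1}, −p³Q^{−1}, p²Q^{−2}, p²Q²}. -/

import Mathlib

open Matrix

noncomputable section

/-- The elementary matrix `E(a,b;c,d)` on `ℂ⁴ ⊗ ℂ⁴`. -/
def E (a b c d : Fin 4) : Matrix (Fin 4 × Fin 4) (Fin 4 × Fin 4) ℂ :=
  Matrix.single (a, b) (c, d) 1

/-- `M ⊗ I₄`, acting on the first two factors of `ℂ⁴ ⊗ ℂ⁴ ⊗ ℂ⁴`. -/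
def op12 (M : Matrix (Fin 4 × Fin 4) (Fin 4 × Fin 4) ℂ) :
    Matrix (Fin 4 × Fin 4 × Fin 4) (Fin 4 × Fin 4 × Fin 4) ℂ :=
  Matrix.of fun x y => M (x.1, x.2.1) (y.1, y.2.1) * (if x.2.2 = y.2.2 then 1 else 0)

/-- `I₄ ⊗ M`, acting on the last two factors of `ℂ⁴ ⊗ ℂ⁴ ⊗ ℂ⁴`. -/
def op23 (M : Matrix (Fin 4 × Fin 4) (Fin 4 × Fin 4) ℂ) :
    Matrix (Fin 4 × Fin 4 × Fin 4) (Fin 4 × Fin 4 × Fin 4) ℂ :=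
  Matrix.of fun x y => (if x.1 = y.1 then 1 else 0) * M (x.2.1, x.2.2) (y.2.1, y.2.2)

/-- The left quantum partial trace `T(C, M)_{a,b} = Σ_{c,d} C_{d,c} M_{(c,a),(d,b)}`. -/
def ptrace (C : Matrix (Fin 4) (Fin 4) ℂ) (M : Matrix (Fin 4 × Fin 4) (Fin 4 × Fin 4) ℂ) :
    Matrix (Fin 4) (Fin 4) ℂ :=
  Matrix.of fun a b => ∑ c : Fin 4, ∑ d : Fin 4, C d c * M (c, a) (d, b)

/-- The quantum R matrix `Ř³` (Case 3), with complex parameters `p, Q`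
(indices shifted from 1–4 to 0–3). -/
def R3 (p Q : ℂ) : Matrix (Fin 4 × Fin 4) (Fin 4 × Fin 4) ℂ :=
  E 0 0 0 0
  - (p ^ 2 * Q⁻¹ ^ 2) • (E 1 1 1 1 + E 2 2 2 2)
  + (p ^ 4) • E 3 3 3 3
  + (p ^ 2 * (Q ^ 2 - Q⁻¹ ^ 2)) • E 2 1 2 1
  + (p * Q⁻¹) • (E 0 1 1 0 + E 0 2 2 0 + E 1 0 0 1 + E 2 0 0 2)
  + (p ^ 3 * Q⁻¹) • (E 1 3 3 1 + E 2 3 3 2 + E 3 1 1 3 + E 3 2 2 3)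
  + (p ^ 2 * Q⁻¹ ^ 2) • (E 0 3 3 0 + E 3 0 0 3)
  - (p ^ 2) • (E 1 2 2 1 + E 2 1 1 2)

/-!
In the basis `vᵢ ⊗ vⱼ` the matrix `Ř³` is block diagonal. The vectors `vᵢ ⊗ vᵢ` are eigenvectors
with eigenvalues `1, −p²Q⁻², −p²Q⁻², p⁴`. On each of the planes spanned by `vᵢ ⊗ vⱼ, vⱼ ⊗ vᵢ` with
`{i, j} ≠ {2, 3}` it swaps the two vectors up to a scalar `s ∈ {pQ⁻¹, p³Q⁻¹, p²Q⁻²}`, with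
eigenvalues `±s`. On the remaining plane it has trace `p²(Q² − Q⁻²)` and determinant `−p⁴`, hence
eigenvalues `p²Q²` and `−p²Q⁻²`. For any other `λ`, every block kills the corresponding
coordinates of a solution of `Ř³ v = λ v`.
-/

theorem R3_mulVec_eq_smul_iff (p Q lam : ℂ) (v : Fin 4 × Fin 4 → ℂ) :
    R3 p Q *ᵥ v = lam • v ↔
      v (0, 0) = lam * v (0, 0) ∧
      p * Q⁻¹ * v (1, 0) = lam * v (0, 1) ∧
      p * Q⁻¹ * v (2, 0) = lam * v (0, 2) ∧
      p ^ 2 * Q⁻¹ ^ 2 * v (3, 0) = lam * v (0, 3) ∧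
      p * Q⁻¹ * v (0, 1) = lam * v (1, 0) ∧
      -(p ^ 2 * Q⁻¹ ^ 2) * v (1, 1) = lam * v (1, 1) ∧
      -p ^ 2 * v (2, 1) = lam * v (1, 2) ∧
      p ^ 3 * Q⁻¹ * v (3, 1) = lam * v (1, 3) ∧
      p * Q⁻¹ * v (0, 2) = lam * v (2, 0) ∧
      p ^ 2 * (Q ^ 2 - Q⁻¹ ^ 2) * v (2, 1) - p ^ 2 * v (1, 2) = lam * v (2, 1) ∧
      -(p ^ 2 * Q⁻¹ ^ 2) * v (2, 2) = lam * v (2, 2) ∧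
      p ^ 3 * Q⁻¹ * v (3, 2) = lam * v (2, 3) ∧
      p ^ 2 * Q⁻¹ ^ 2 * v (0, 3) = lam * v (3, 0) ∧
      p ^ 3 * Q⁻¹ * v (1, 3) = lam * v (3, 1) ∧
      p ^ 3 * Q⁻¹ * v (2, 3) = lam * v (3, 2) ∧
      p ^ 4 * v (3, 3) = lam * v (3, 3) := by
  simp only [funext_iff, Prod.forall, Fin.forall_fin_succ]
  simp [R3, E, Matrix.single_mulVec, Function.update_apply, Matrix.add_mulVec, Matrix.sub_mulVec,
    and_assoc]

/-- `μ, ν` are the roots of the characteristic polynomial of `!![a, b; c, d]`, and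
`(lam - μ) * (lam - ν)` annihilates both coordinates of an eigenvector for `lam`. -/
theorem eq_zero_of_two_by_two_eigen {R : Type*} [CommRing R] [NoZeroDivisors R]
    {a b c d μ ν lam x y : R} (hx : a * x + b * y = lam * x) (hy : c * x + d * y = lam * y)
    (htr : μ + ν = a + d) (hdet : μ * ν = a * d - b * c) (hμ : lam ≠ μ) (hν : lam ≠ ν) :
    x = 0 ∧ y = 0 := by
  have hchar : (lam - μ) * (lam - ν) ≠ 0 := mul_ne_zero (sub_ne_zero.2 hμ) (sub_ne_zero.2 hν)
  constructor
  · refine (mul_eq_zero.1 ?_).resolve_left hchar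
    linear_combination (d - lam) * hx - b * hy - lam * x * htr + x * hdet
  · refine (mul_eq_zero.1 ?_).resolve_left hchar
    linear_combination -c * hx + (a - lam) * hy - lam * y * htr + y * hdet

theorem eq_zero_of_swap_eigen {R : Type*} [CommRing R] [NoZeroDivisors R] {s lam x y : R}
    (hx : s * y = lam * x) (hy : s * x = lam * y) (hs : lam ≠ s) (hs' : lam ≠ -s) :
    x = 0 ∧ y = 0 :=
  eq_zero_of_two_by_two_eigen (a := 0) (b := s) (c := s) (d := 0) (μ := s) (ν := -s)
    (by linear_combination hx) (by linear_combination hy) (by ring) (by ring) hs hs'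

theorem R3_eigenvector_eq_zero {p Q lam : ℂ} (hQ : Q ≠ 0) {v : Fin 4 × Fin 4 → ℂ}
    (hv : R3 p Q *ᵥ v = lam • v) (h₁ : lam ≠ 1) (h₂ : lam ≠ -(p ^ 2 * Q⁻¹ ^ 2))
    (h₃ : lam ≠ p ^ 4) (h₄ : lam ≠ p * Q⁻¹) (h₅ : lam ≠ -(p * Q⁻¹)) (h₆ : lam ≠ p ^ 3 * Q⁻¹)
    (h₇ : lam ≠ -(p ^ 3 * Q⁻¹)) (h₈ : lam ≠ p ^ 2 * Q⁻¹ ^ 2) (h₉ : lam ≠ p ^ 2 * Q ^ 2) :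
    v = 0 := by
  obtain ⟨e00, e01, e02, e03, e10, e11, e12, e13, e20, e21, e22, e23, e30, e31, e32, e33⟩ :=
    (R3_mulVec_eq_smul_iff p Q lam v).1 hv
  have z00 := (mul_eq_mul_right_iff.1 ((one_mul _).trans e00)).resolve_left h₁.symm
  have z11 := (mul_eq_mul_right_iff.1 e11).resolve_left h₂.symm
  have z22 := (mul_eq_mul_right_iff.1 e22).resolve_left h₂.symm
  have z33 := (mul_eq_mul_right_iff.1 e33).resolve_left h₃.symm
  obtain ⟨z01, z10⟩ := eq_zero_of_swap_eigen e01 e10 h₄ h₅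
  obtain ⟨z02, z20⟩ := eq_zero_of_swap_eigen e02 e20 h₄ h₅
  obtain ⟨z13, z31⟩ := eq_zero_of_swap_eigen e13 e31 h₆ h₇
  obtain ⟨z23, z32⟩ := eq_zero_of_swap_eigen e23 e32 h₆ h₇
  obtain ⟨z03, z30⟩ := eq_zero_of_swap_eigen e03 e30 h₈ h₂
  obtain ⟨z12, z21⟩ := eq_zero_of_two_by_two_eigen (a := 0) (b := -p ^ 2) (c := -p ^ 2)
    (d := p ^ 2 * (Q ^ 2 - Q⁻¹ ^ 2)) (μ := p ^ 2 * Q ^ 2) (ν := -(p ^ 2 * Q⁻¹ ^ 2))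
    (x := v (1, 2)) (y := v (2, 1))
    (by linear_combination e12) (by linear_combination e21) (by ring) (by field_simp; ring)
    h₉ h₂
  ext ⟨i, j⟩
  fin_cases i <;> fin_cases j <;> assumption

theorem R3_exists_eigenvector {p Q lam : ℂ} (hQ : Q ≠ 0)
    (h : lam ∈ ({1, -(p ^ 2 * Q⁻¹ ^ 2), p ^ 4, p * Q⁻¹, -(p * Q⁻¹),
      p ^ 3 * Q⁻¹, -(p ^ 3 * Q⁻¹), p ^ 2 * Q⁻¹ ^ 2, p ^ 2 * Q ^ 2} : Set ℂ)) :
    ∃ v : Fin 4 × Fin 4 → ℂ, v ≠ 0 ∧ R3 p Q *ᵥ v = lam • v := by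
  simp only [Set.mem_insert_iff, Set.mem_singleton_iff] at h
  obtain rfl | rfl | rfl | rfl | rfl | rfl | rfl | rfl | rfl := h
  · exact ⟨Pi.single (0, 0) 1, Function.ne_iff.2 ⟨(0, 0), by simp⟩,
      (R3_mulVec_eq_smul_iff ..).2 (by simp)⟩
  · exact ⟨Pi.single (1, 1) 1, Function.ne_iff.2 ⟨(1, 1), by simp⟩,
      (R3_mulVec_eq_smul_iff ..).2 (by simp)⟩
  · exact ⟨Pi.single (3, 3) 1, Function.ne_iff.2 ⟨(3, 3), by simp⟩,
      (R3_mulVec_eq_smul_iff ..).2 (by simp)⟩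
  · exact ⟨Pi.single (0, 1) 1 + Pi.single (1, 0) 1, Function.ne_iff.2 ⟨(0, 1), by simp⟩,
      (R3_mulVec_eq_smul_iff ..).2 (by simp)⟩
  · exact ⟨Pi.single (0, 1) 1 - Pi.single (1, 0) 1, Function.ne_iff.2 ⟨(0, 1), by simp⟩,
      (R3_mulVec_eq_smul_iff ..).2 (by simp)⟩
  · exact ⟨Pi.single (1, 3) 1 + Pi.single (3, 1) 1, Function.ne_iff.2 ⟨(1, 3), by simp⟩,
      (R3_mulVec_eq_smul_iff ..).2 (by simp)⟩
  · exact ⟨Pi.single (1, 3) 1 - Pi.single (3, 1) 1, Function.ne_iff.2 ⟨(1, 3), by simp⟩,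
      (R3_mulVec_eq_smul_iff ..).2 (by simp)⟩
  · exact ⟨Pi.single (0, 3) 1 + Pi.single (3, 0) 1, Function.ne_iff.2 ⟨(0, 3), by simp⟩,
      (R3_mulVec_eq_smul_iff ..).2 (by simp)⟩
  · exact ⟨Pi.single (1, 2) 1 - Pi.single (2, 1) (Q ^ 2), Function.ne_iff.2 ⟨(1, 2), by simp⟩,
      (R3_mulVec_eq_smul_iff ..).2 (by simp; field_simp; ring)⟩

theorem R3_eigenvalues_general (p Q : ℂ) (hQ : Q ≠ 0) :
    ∀ lam : ℂ,
      (∃ v : Fin 4 × Fin 4 → ℂ, v ≠ 0 ∧ (R3 p Q).mulVec v = lam • v) ↔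
        lam ∈ ({1, -(p ^ 2 * Q⁻¹ ^ 2), p ^ 4, p * Q⁻¹, -(p * Q⁻¹),
                p ^ 3 * Q⁻¹, -(p ^ 3 * Q⁻¹), p ^ 2 * Q⁻¹ ^ 2, p ^ 2 * Q ^ 2} : Set ℂ) := by
  intro lam
  refine ⟨fun ⟨v, hv0, hv⟩ => ?_, R3_exists_eigenvector hQ⟩
  by_contra h
  simp only [Set.mem_insert_iff, Set.mem_singleton_iff, not_or] at h
  obtain ⟨h₁, h₂, h₃, h₄, h₅, h₆, h₇, h₈, h₉⟩ := h
  exact hv0 (R3_eigenvector_eq_zero hQ hv h₁ h₂ h₃ h₄ h₅ h₆ h₇ h₈ h₉)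

/-- The set of eigenvalues of the quantum R matrix `Ř³` is exactly
`{1, −p²Q⁻², p⁴, pQ⁻¹, −pQ⁻¹, p³Q⁻¹, −p³Q⁻¹, p²Q⁻², p²Q²}`. -/
theorem R3_eigenvalues (p Q : ℂ) (hp : p ≠ 0) (hQ : Q ≠ 0) :
    ∀ lam : ℂ,
      (∃ v : Fin 4 × Fin 4 → ℂ, v ≠ 0 ∧ (R3 p Q).mulVec v = lam • v) ↔
        lam ∈ ({1, -(p ^ 2 * Q⁻¹ ^ 2), p ^ 4, p * Q⁻¹, -(p * Q⁻¹),
                p ^ 3 * Q⁻¹, -(p ^ 3 * Q⁻¹), p ^ 2 * Q⁻¹ ^ 2, p ^ 2 * Q ^ 2} : Set ℂ) :=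
  R3_eigenvalues_general p Q hQ
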